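/- In a trim lattice, for every cover relation y ⋖ z the intersection y_M ∩ z_J consists of exactly one element, and this element equals both min(z_J \ y_J) and max(y_M \ z_M). -/

import Mathlib

/-- An element `x` of a lattice is *left modular* if `(y ⊔ x) ⊓ z = y ⊔ (x ⊓ z)`
for all `y ≤ z`. -/
def LeftModular {L : Type*} [Lattice L] (x : L) : Prop :=
  ∀ y z : L, y ≤ z → (y ⊔ x) ⊓ z = y ⊔ (x ⊓ z)

/-- The data of an extremal lattice of length `n` together with a fixed
maximal-length chain `x₀ ⋖ ⋯ ⋖ xₙ` and the induced numberings of the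
join-irreducibles `j₁, …, jₙ` and meet-irreducibles `m₁, …, mₙ`. -/
structure ExtremalChainData (L : Type*) [Lattice L] [Fintype L] [BoundedOrder L]
    (n : ℕ) where
  x : Fin (n + 1) → L
  x_strictMono : StrictMono x
  x_bot : x 0 = ⊥
  x_top : x (Fin.last n) = ⊤
  maxlen : ∀ (m : ℕ) (c : Fin (m + 1) → L), StrictMono c → m ≤ n
  j : Fin n → L
  m : Fin n → L
  j_irr : ∀ i, SupIrred (j i)
  m_irr : ∀ i, InfIrred (m i)
  j_inj : Function.Injective j
  m_inj : Function.Injective m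
  j_surj : ∀ a : L, SupIrred a → a ∈ Set.range j
  m_surj : ∀ a : L, InfIrred a → a ∈ Set.range m
  x_eq_sup : ∀ i : Fin (n + 1),
    x i = (Finset.univ.filter fun k : Fin n => (k : ℕ) < (i : ℕ)).sup j
  x_eq_inf : ∀ i : Fin (n + 1),
    x i = (Finset.univ.filter fun k : Fin n => (i : ℕ) ≤ (k : ℕ)).inf m

namespace ExtremalChainData

variable {L : Type*} [Lattice L] [Fintype L] [BoundedOrder L] {n : ℕ}

/-- `x_J`: the set of indices of join-irreducibles lying below `a`. -/
def setJ (D : ExtremalChainData L n) (a : L) : Set (Fin n) := {i | D.j i ≤ a}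

/-- `x_M`: the set of indices of meet-irreducibles lying above `a`. -/
def setM (D : ExtremalChainData L n) (a : L) : Set (Fin n) := {i | a ≤ D.m i}

/-- The Galois graph: a directed edge `i → k` when `jᵢ ≰ m_k` and `i ≠ k`. -/
def galoisEdge (D : ExtremalChainData L n) (i k : Fin n) : Prop :=
  ¬ D.j i ≤ D.m k ∧ i ≠ k

/-- The left modular labelling: `i` is the label of the cover `y ⋖ z` iff `i` is
minimal with `y ⊔ (xᵢ ⊓ z) = z`. -/
def IsLabel (D : ExtremalChainData L n) (y z : L) (i : Fin n) : Prop :=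
  y ⊔ (D.x i.succ ⊓ z) = z ∧ ∀ k : Fin n, y ⊔ (D.x k.succ ⊓ z) = z → i ≤ k

open scoped Classical in
/-- `D^γ(a)`: the set of labels of cover relations below `a`. -/
noncomputable def downLabels (D : ExtremalChainData L n) (a : L) : Finset (Fin n) :=
  Finset.univ.filter fun i => ∃ y, y ⋖ a ∧ D.IsLabel y a i

open scoped Classical in
/-- `U^γ(a)`: the set of labels of cover relations above `a`. -/
noncomputable def upLabels (D : ExtremalChainData L n) (a : L) : Finset (Fin n) :=
  Finset.univ.filter fun i => ∃ z, a ⋖ z ∧ D.IsLabel a z i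

/-- The fixed chain consists of left modular elements, i.e. the lattice is trim. -/
def IsTrim (D : ExtremalChainData L n) : Prop := ∀ i, LeftModular (D.x i)

end ExtremalChainData

open ExtremalChainData

/-!
Let `i` be the step of the left modular chain at which `y ⊔ xₛ` first reaches `z`, so
`z ≰ y ⊔ xᵢ` and `z ≤ y ⊔ xᵢ₊₁`. Since `y ⋖ z` and `xᵢ` is left modular,
`(y ⊔ xᵢ) ⊓ z = y ⊔ (xᵢ ⊓ z)` is `y`, i.e. `xᵢ ⊓ z ≤ y`, and likewise `xᵢ₊₁ ⊓ z ≰ y`.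
As `jₖ ≤ xₛ ↔ k < s` and `xₛ ≤ mₖ ↔ s ≤ k`, the first fact puts every element of `z_J \ y_J`
at or above `i` and the second every element of `y_M \ z_M` at or below `i`. Separating
`xᵢ₊₁ ⊓ z` from `y` by a join-irreducible, and `z` from `y ⊔ xᵢ` by a meet-irreducible,
shows that `i` lies in both sets. Finally `y_M ∩ z_J` lies in both sets because `jₖ ≰ mₖ`.
-/

theorem Fin.exists_not_castSucc_and_succ {n : ℕ} {P : Fin (n + 1) → Prop} (h0 : ¬ P 0)
    (hlast : P (Fin.last n)) : ∃ i : Fin n, ¬ P i.castSucc ∧ P i.succ := by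
  by_contra! h
  exact Fin.induction h0 h (Fin.last n) hlast

theorem exists_supIrred_le_not_le {α : Type*} [SemilatticeSup α] [OrderBot α] [WellFoundedLT α]
    {a b : α} (h : ¬ a ≤ b) : ∃ c, SupIrred c ∧ c ≤ a ∧ ¬ c ≤ b := by
  obtain ⟨s, rfl, hs⟩ := exists_supIrred_decomposition a
  by_contra! hcon
  exact h (Finset.sup_le fun c hc => hcon c (hs hc) (Finset.le_sup (f := id) hc))

theorem exists_infIrred_ge_not_ge {α : Type*} [SemilatticeInf α] [OrderTop α] [WellFoundedGT α]
    {a b : α} (h : ¬ b ≤ a) : ∃ c, InfIrred c ∧ a ≤ c ∧ ¬ b ≤ c :=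
  exists_supIrred_le_not_le (α := αᵒᵈ) h

theorem LeftModular.le_sup_iff_not_inf_le {L : Type*} [Lattice L] {x y z : L}
    (hx : LeftModular x) (hyz : y ⋖ z) : z ≤ y ⊔ x ↔ ¬ x ⊓ z ≤ y := by
  rw [← inf_eq_right, hx y z hyz.le]
  refine ⟨fun h hle => hyz.ne (by rwa [sup_eq_left.2 hle] at h), fun h => ?_⟩
  exact (hyz.eq_or_eq le_sup_left (sup_le hyz.le inf_le_right)).resolve_left
    fun h' => h (sup_eq_left.1 h')

namespace ExtremalChainData

variable {L : Type*} [Lattice L] [Fintype L] [BoundedOrder L] {n : ℕ}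
  (D : ExtremalChainData L n)

theorem j_le_x {k : Fin n} {s : Fin (n + 1)} (h : (k : ℕ) < s) : D.j k ≤ D.x s := by
  classical
  rw [D.x_eq_sup]
  exact Finset.le_sup (by simp [h])

theorem x_le_m {s : Fin (n + 1)} {k : Fin n} (h : (s : ℕ) ≤ k) : D.x s ≤ D.m k := by
  classical
  rw [D.x_eq_inf]
  exact Finset.inf_le (by simp [h])

theorem x_succ_le_sup_j (k : Fin n) : D.x k.succ ≤ D.x k.castSucc ⊔ D.j k := by
  classical
  rw [D.x_eq_sup k.succ]
  refine Finset.sup_le fun t ht => ?_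
  rw [Finset.mem_filter, Fin.val_succ, Nat.lt_succ_iff] at ht
  rcases ht.2.lt_or_eq with h | h
  · exact le_sup_of_le_left (D.j_le_x h)
  · exact Fin.ext h ▸ le_sup_right

theorem inf_m_le_x_castSucc (k : Fin n) : D.x k.succ ⊓ D.m k ≤ D.x k.castSucc := by
  classical
  rw [D.x_eq_inf k.castSucc]
  refine Finset.le_inf fun t ht => ?_
  rw [Finset.mem_filter, Fin.val_castSucc] at ht
  rcases ht.2.lt_or_eq with h | h
  · exact inf_le_of_left_le (D.x_le_m h)
  · exact Fin.ext h.symm ▸ inf_le_right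

theorem j_le_x_iff {k : Fin n} {s : Fin (n + 1)} : D.j k ≤ D.x s ↔ (k : ℕ) < s := by
  refine ⟨fun h => ?_, D.j_le_x⟩
  by_contra! hsk
  have hj : D.j k ≤ D.x k.castSucc :=
    h.trans (D.x_strictMono.monotone (Fin.le_def.2 (by simpa using hsk)))
  exact (D.x_strictMono k.castSucc_lt_succ).not_ge
    ((D.x_succ_le_sup_j k).trans (sup_le le_rfl hj))

theorem x_le_m_iff {s : Fin (n + 1)} {k : Fin n} : D.x s ≤ D.m k ↔ (s : ℕ) ≤ k := by
  refine ⟨fun h => ?_, D.x_le_m⟩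
  by_contra! hks
  have hm : D.x k.succ ≤ D.m k :=
    (D.x_strictMono.monotone (by simpa [Fin.le_def] using hks)).trans h
  exact (D.x_strictMono k.castSucc_lt_succ).not_ge
    ((le_inf le_rfl hm).trans (D.inf_m_le_x_castSucc k))

theorem j_not_le_m (k : Fin n) : ¬ D.j k ≤ D.m k := fun h =>
  (D.x_le_m_iff (s := k.succ)).not.2 (by simp)
    ((D.x_succ_le_sup_j k).trans (sup_le (D.x_le_m le_rfl) h))

theorem setM_inter_setJ_subset (y z : L) :
    D.setM y ∩ D.setJ z ⊆ (D.setJ z \ D.setJ y) ∩ (D.setM y \ D.setM z) :=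
  fun k ⟨hym, hjz⟩ => ⟨⟨hjz, fun hjy => D.j_not_le_m k (hjy.trans hym)⟩,
    ⟨hym, fun hzm => D.j_not_le_m k (hjz.trans hzm)⟩⟩

theorem le_of_mem_setJ_diff {y z : L} {s : Fin (n + 1)} (hs : D.x s ⊓ z ≤ y) {k : Fin n}
    (hk : k ∈ D.setJ z \ D.setJ y) : (s : ℕ) ≤ k := by
  by_contra! hks
  exact hk.2 ((le_inf (D.j_le_x hks) hk.1).trans hs)

theorem lt_of_mem_setM_diff {y z : L} {s : Fin (n + 1)} (hs : z ≤ y ⊔ D.x s) {k : Fin n}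
    (hk : k ∈ D.setM y \ D.setM z) : (k : ℕ) < s := by
  by_contra! hsk
  exact hk.2 (hs.trans (sup_le hk.1 (D.x_le_m hsk)))

theorem exists_isLeast_setJ_diff_isGreatest_setM_diff (hD : D.IsTrim) {y z : L}
    (hyz : y ⋖ z) : ∃ i : Fin n,
      IsLeast (D.setJ z \ D.setJ y) i ∧ IsGreatest (D.setM y \ D.setM z) i := by
  obtain ⟨i, hzi, hzi'⟩ := Fin.exists_not_castSucc_and_succ (P := fun s => z ≤ y ⊔ D.x s)
    (by simpa [D.x_bot] using hyz.lt.not_ge) (by simp [D.x_top])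
  have hinf : D.x i.castSucc ⊓ z ≤ y := ((hD _).le_sup_iff_not_inf_le hyz).not_left.1 hzi
  have lower : i ∈ lowerBounds (D.setJ z \ D.setJ y) := fun k hk => D.le_of_mem_setJ_diff hinf hk
  have upper : i ∈ upperBounds (D.setM y \ D.setM z) := fun k hk =>
    Nat.lt_succ_iff.1 (D.lt_of_mem_setM_diff hzi' hk)
  obtain ⟨c, hc, hcle, hcy⟩ :=
    exists_supIrred_le_not_le (((hD _).le_sup_iff_not_inf_le hyz).1 hzi')
  obtain ⟨t, rfl⟩ := D.j_surj c hc
  have ht : t ∈ D.setJ z \ D.setJ y := ⟨hcle.trans inf_le_right, hcy⟩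
  have hti : t = i := le_antisymm
    (Fin.le_def.2 (Nat.lt_succ_iff.1 (by simpa using D.j_le_x_iff.1 (hcle.trans inf_le_left))))
    (lower ht)
  obtain ⟨d, hd, hdle, hzd⟩ := exists_infIrred_ge_not_ge hzi
  obtain ⟨u, rfl⟩ := D.m_surj d hd
  have hu : u ∈ D.setM y \ D.setM z := ⟨le_sup_left.trans hdle, hzd⟩
  have hui : u = i := le_antisymm (upper hu)
    (Fin.le_def.2 (by simpa using D.x_le_m_iff.1 (le_sup_right.trans hdle)))
  subst hti hui
  exact ⟨_, ⟨ht, lower⟩, ⟨hu, upper⟩⟩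

end ExtremalChainData

/-- In a trim lattice, for every cover relation `y ⋖ z` the set `y_M ∩ z_J` is
a singleton `{i}`, with `i = min (z_J \ y_J) = max (y_M \ z_M)`. -/
theorem cover_overlap_singleton {L : Type*} [Lattice L] [Fintype L] [BoundedOrder L]
    {n : ℕ} (D : ExtremalChainData L n) (hD : D.IsTrim) :
    ∀ y z : L, y ⋖ z → ∃ i : Fin n,
      D.setM y ∩ D.setJ z = {i} ∧
      IsLeast (D.setJ z \ D.setJ y) i ∧
      IsGreatest (D.setM y \ D.setM z) i := by
  intro y z hyz
  obtain ⟨i, hleast, hgreatest⟩ := D.exists_isLeast_setJ_diff_isGreatest_setM_diff hD hyz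
  refine ⟨i, Set.eq_singleton_iff_unique_mem.2 ⟨⟨hgreatest.1.1, hleast.1.1⟩, fun k hk => ?_⟩,
    hleast, hgreatest⟩
  obtain ⟨hkJ, hkM⟩ := D.setM_inter_setJ_subset y z hk
  exact le_antisymm (hgreatest.2 hkM) (hleast.2 hkJ)
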